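/- arXiv:1604.03500 — 8 statements merged into one kernel-verified Lean document; each statement's English description precedes it below -/
import Mathlib

section
/- Let P be a poset and x₁, x₂, y₁, y₂ ∈ P. The space of module homomorphisms from the interval module M[x₁,x₂] to the interval module M[y₁,y₂] is one-dimensional if x₁ ≤ y₁ ≤ x₂ ≤ y₂, and zero otherwise. -/
/-- The space of module homomorphisms `M[S] → M[T]` between interval modules over
the incidence category of a poset `Q`, where `S`, `T` are the supporting intervals.
A homomorphism is given by its scalar components `φ x` (nonzero only on `S ∩ T`),
subject to the naturality conditions coming from the identity structure maps. -/
def intervalHom (K : Type*) [Field K] {Q : Type*} [PartialOrder Q] (S T : Set Q) :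
    Submodule K (Q → K) where
  carrier := {φ | (∀ x, x ∉ S ∩ T → φ x = 0) ∧
    (∀ x y, x ≤ y → x ∈ S ∩ T → y ∈ S ∩ T → φ x = φ y) ∧
    (∀ x y, x ≤ y → y ∈ S ∩ T → x ∈ T → x ∉ S → φ y = 0) ∧
    (∀ x y, x ≤ y → x ∈ S ∩ T → y ∈ S → y ∉ T → φ x = 0)}
  add_mem' := by
    rintro φ ψ ⟨h1, h2, h3, h4⟩ ⟨g1, g2, g3, g4⟩
    exact ⟨fun x hx => by simp [h1 x hx, g1 x hx],
      fun x y h hx hy => by simp [h2 x y h hx hy, g2 x y h hx hy],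
      fun x y h hy hxT hxS => by simp [h3 x y h hy hxT hxS, g3 x y h hy hxT hxS],
      fun x y h hx hyS hyT => by simp [h4 x y h hx hyS hyT, g4 x y h hx hyS hyT]⟩
  zero_mem' :=
    ⟨fun _ _ => rfl, fun _ _ _ _ _ => rfl, fun _ _ _ _ _ _ => rfl,
      fun _ _ _ _ _ _ => rfl⟩
  smul_mem' := by
    rintro c φ ⟨h1, h2, h3, h4⟩
    exact ⟨fun x hx => by simp [h1 x hx],
      fun x y h hx hy => by simp [h2 x y h hx hy],
      fun x y h hy hxT hxS => by simp [h3 x y h hy hxT hxS],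
      fun x y h hx hyS hyT => by simp [h4 x y h hx hyS hyT]⟩

/-! A homomorphism `M[S] → M[T]` vanishes off `S ∩ T` and takes equal values at comparable
points of `S ∩ T`. For intervals with `x₁ ≤ y₁ ≤ x₂ ≤ y₂` the overlap `S ∩ T` has least element
`y₁` and is closed downwards in `T` and upwards in `S`, so every constant on it is allowed and
the space is spanned by the indicator of the overlap. Otherwise either the overlap is empty, or
naturality forces the constant to vanish: at `y₁ ∉ S` if `x₁ ≰ y₁`, or at `x₂ ∉ T` if
`x₂ ≰ y₂`. -/

open Set

namespace intervalHom

variable {K : Type*} [Field K] {Q : Type*} [PartialOrder Q]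

section General

variable {S T : Set Q}

theorem indicator_one_mem
    (hdown : ∀ x y, x ≤ y → y ∈ S ∩ T → x ∈ T → x ∈ S)
    (hup : ∀ x y, x ≤ y → x ∈ S ∩ T → y ∈ S → y ∈ T) :
    (S ∩ T).indicator (1 : Q → K) ∈ intervalHom K S T := by
  refine ⟨fun x hx => indicator_of_notMem hx _, ?_, ?_, ?_⟩
  · intro x y _ hx hy
    rw [indicator_of_mem hx, indicator_of_mem hy, Pi.one_apply, Pi.one_apply]
  · intro x y hxy hy hxT hxS
    exact absurd (hdown x y hxy hy hxT) hxS
  · intro x y hxy hx hyS hyT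
    exact absurd (hup x y hxy hx hyS) hyT

theorem eq_smul_indicator_one {φ : Q → K} (hφ : φ ∈ intervalHom K S T) {m : Q}
    (hm : m ∈ S ∩ T) (hm_le : ∀ x ∈ S ∩ T, m ≤ x) :
    φ = φ m • (S ∩ T).indicator 1 := by
  funext x
  by_cases hx : x ∈ S ∩ T
  · simp [indicator_of_mem hx, hφ.2.1 m x (hm_le x hx) hm hx]
  · simp [indicator_of_notMem hx, hφ.1 x hx]

theorem eq_span_indicator_one {m : Q} (hm : m ∈ S ∩ T) (hm_le : ∀ x ∈ S ∩ T, m ≤ x)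
    (hdown : ∀ x y, x ≤ y → y ∈ S ∩ T → x ∈ T → x ∈ S)
    (hup : ∀ x y, x ≤ y → x ∈ S ∩ T → y ∈ S → y ∈ T) :
    intervalHom K S T = K ∙ (S ∩ T).indicator 1 := by
  refine le_antisymm (fun φ hφ => ?_) ((Submodule.span_singleton_le_iff_mem _ _).2
    (indicator_one_mem hdown hup))
  rw [Submodule.mem_span_singleton]
  exact ⟨φ m, (eq_smul_indicator_one hφ hm hm_le).symm⟩

theorem rank_eq_one {m : Q} (hm : m ∈ S ∩ T) (hm_le : ∀ x ∈ S ∩ T, m ≤ x)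
    (hdown : ∀ x y, x ≤ y → y ∈ S ∩ T → x ∈ T → x ∈ S)
    (hup : ∀ x y, x ≤ y → x ∈ S ∩ T → y ∈ S → y ∈ T) :
    Module.rank K (intervalHom K S T) = 1 := by
  have hne : (S ∩ T).indicator (1 : Q → K) ≠ 0 := fun h => by
    simpa [indicator_of_mem hm] using congrFun h m
  rw [eq_span_indicator_one hm hm_le hdown hup, Module.rank_eq_one_iff_finrank_eq_one,
    finrank_span_singleton hne]

end General

variable {x₁ x₂ y₁ y₂ : Q}

theorem rank_Icc_eq_one (h₁ : x₁ ≤ y₁) (h₂ : y₁ ≤ x₂) (h₃ : x₂ ≤ y₂) :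
    Module.rank K (intervalHom K (Icc x₁ x₂) (Icc y₁ y₂)) = 1 :=
  rank_eq_one (m := y₁) ⟨⟨h₁, h₂⟩, le_rfl, h₂.trans h₃⟩ (fun _ hx => hx.2.1)
    (fun _ _ hxy hy hxT => ⟨h₁.trans hxT.1, hxy.trans hy.1.2⟩)
    (fun _ _ hxy hx hyS => ⟨hx.2.1.trans hxy, hyS.2.trans h₃⟩)

theorem eq_zero_of_mem_Icc {φ : Q → K} (hφ : φ ∈ intervalHom K (Icc x₁ x₂) (Icc y₁ y₂))
    (h : ¬(x₁ ≤ y₁ ∧ y₁ ≤ x₂ ∧ x₂ ≤ y₂)) : φ = 0 := by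
  funext x
  by_cases hx : x ∈ Icc x₁ x₂ ∩ Icc y₁ y₂
  · obtain ⟨⟨hx₁, hx₂⟩, hy₁, hy₂⟩ := hx
    by_cases h₁ : x₁ ≤ y₁
    · have h₃ : ¬x₂ ≤ y₂ := fun h₃ => h ⟨h₁, hy₁.trans hx₂, h₃⟩
      exact hφ.2.2.2 x x₂ hx₂ ⟨⟨hx₁, hx₂⟩, hy₁, hy₂⟩ ⟨hx₁.trans hx₂, le_rfl⟩ (fun h => h₃ h.2)
    · exact hφ.2.2.1 y₁ x hy₁ ⟨⟨hx₁, hx₂⟩, hy₁, hy₂⟩ ⟨le_rfl, hy₁.trans hy₂⟩ (fun h => h₁ h.1)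
  · exact hφ.1 x hx

theorem rank_Icc_eq_zero (h : ¬(x₁ ≤ y₁ ∧ y₁ ≤ x₂ ∧ x₂ ≤ y₂)) :
    Module.rank K (intervalHom K (Icc x₁ x₂) (Icc y₁ y₂)) = 0 := by
  rw [(Submodule.eq_bot_iff _).2 fun _ hφ => eq_zero_of_mem_Icc hφ h, rank_bot]

end intervalHom

/-- `Hom(M[x₁,x₂], M[y₁,y₂])` is one-dimensional if `x₁ ≤ y₁ ≤ x₂ ≤ y₂`
and zero otherwise. -/
theorem hom_interval_modules (K : Type*) [Field K] {Q : Type*} [PartialOrder Q]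
    (x₁ x₂ y₁ y₂ : Q) :
    ((x₁ ≤ y₁ ∧ y₁ ≤ x₂ ∧ x₂ ≤ y₂) →
      Module.rank K ↥(intervalHom K (Set.Icc x₁ x₂) (Set.Icc y₁ y₂)) = 1) ∧
    (¬(x₁ ≤ y₁ ∧ y₁ ≤ x₂ ∧ x₂ ≤ y₂) →
      Module.rank K ↥(intervalHom K (Set.Icc x₁ x₂) (Set.Icc y₁ y₂)) = 0) :=
  ⟨fun ⟨h₁, h₂, h₃⟩ => intervalHom.rank_Icc_eq_one h₁ h₂ h₃, intervalHom.rank_Icc_eq_zero⟩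
end

section
/- Let P be a poset, d a positive integer, and x, y ∈ P^d. Then x interlaces y (i.e., x₁ ≤ y₁ ≤ x₂ ≤ y₂ ≤ ⋯ ≤ x_d ≤ y_d) if and only if x ⪯ y in the product order and every z ∈ P^d with x ⪯ z ⪯ y is an ordered sequence (i.e., z₁ ≤ z₂ ≤ ⋯ ≤ z_d). -/
/-- `x` interlaces `y`: `x₁ ≤ y₁ ≤ x₂ ≤ y₂ ≤ ⋯ ≤ x_d ≤ y_d`. -/
def Interlaces {P : Type*} [PartialOrder P] {d : ℕ} (x y : Fin d → P) : Prop :=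
  (∀ i, x i ≤ y i) ∧ ∀ (i : ℕ) (h : i + 1 < d), y ⟨i, Nat.lt_of_succ_lt h⟩ ≤ x ⟨i + 1, h⟩

theorem Fin.monotone_iff_le_add_one {P : Type*} [Preorder P] {d : ℕ} {f : Fin d → P} :
    Monotone f ↔ ∀ (i : ℕ) (h : i + 1 < d), f ⟨i, Nat.lt_of_succ_lt h⟩ ≤ f ⟨i + 1, h⟩ := by
  cases d with
  | zero => exact ⟨fun _ _ h => by omega, fun _ => Subsingleton.monotone f⟩
  | succ n =>
    rw [Fin.monotone_iff_le_succ]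
    exact ⟨fun h i hi => h ⟨i, by omega⟩, fun h i => h i (by omega)⟩

namespace Interlaces

variable {P : Type*} [PartialOrder P] {d : ℕ} {x y z : Fin d → P}

theorem monotone_of_le_of_le (h : Interlaces x y) (hxz : x ≤ z) (hzy : z ≤ y) :
    Monotone z :=
  Fin.monotone_iff_le_add_one.2 fun i hi => (hzy _).trans ((h.2 i hi).trans (hxz _))

/-- The witness is `y` up to position `i` and `x` after it: it lies between `x` and `y`,
so its monotonicity at `i ≤ i + 1` reads `y i ≤ x (i + 1)`. -/
theorem of_forall_monotone (hxy : x ≤ y) (h : ∀ z, x ≤ z → z ≤ y → Monotone z) :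
    Interlaces x y := by
  classical
  refine ⟨hxy, fun i hi => ?_⟩
  let a : Fin d := ⟨i, Nat.lt_of_succ_lt hi⟩
  let b : Fin d := ⟨i + 1, hi⟩
  have hab : a < b := Fin.mk_lt_mk.2 i.lt_succ_self
  obtain ⟨hxz, hzy⟩ := (Finset.Iic a).piecewise_mem_Icc' (f := y) (g := x) hxy
  simpa [hab.not_ge] using h _ hxz hzy hab.le

end Interlaces

theorem interlaces_iff_interval_ordered_general {P : Type*} [PartialOrder P] {d : ℕ}
    (x y : Fin d → P) :
    Interlaces x y ↔
      (x ≤ y ∧ ∀ z : Fin d → P, x ≤ z → z ≤ y → Monotone z) :=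
  ⟨fun h => ⟨h.1, fun _ => h.monotone_of_le_of_le⟩,
    fun h => Interlaces.of_forall_monotone h.1 h.2⟩

/-- `x ↝ y` iff `x ⪯ y` in the product order and every `z` with `x ⪯ z ⪯ y`
is an ordered sequence. -/
theorem interlaces_iff_interval_ordered {P : Type*} [PartialOrder P] {d : ℕ} (hd : 0 < d)
    (x y : Fin d → P) :
    Interlaces x y ↔
      (x ≤ y ∧ ∀ z : Fin d → P, x ≤ z → z ≤ y → Monotone z) :=
  interlaces_iff_interval_ordered_general x y
end

section
/- Let ℓ be a Kupisch series of type A_n, d ≥ 1, and λ ∈ os_ℓ^{d+1} (i.e., λ is an ordered sequence 0 ≤ λ₁ ≤ ⋯ ≤ λ_{d+1} ≤ n−1 with λ_{d+1} − λ₁ + 1 ≤ ℓ_{λ_{d+1}}). If μ is an ordered sequence with λ₁ ≤ μ₁ ≤ λ₂ ≤ μ₂ ≤ ⋯ ≤ λ_d ≤ μ_d ≤ λ_{d+1}, then μ ∈ os_ℓ^d, i.e., μ_d − μ₁ + 1 ≤ ℓ_{μ_d}. -/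
/-!
Along a Kupisch series `ℓ` can grow by at most one per step, so `ℓ_b ≥ ℓ_{b'} - (b' - b)` for
`b ≤ b'`. Hence if the interval `[a', b']` has length at most `ℓ_{b'}`, every subinterval
`[a, b]` has length at most `ℓ_b`. The sequence `μ` interlaced with `λ` is monotone and
`[μ₁, μ_d] ⊆ [λ₁, λ_{d+1}]`.
-/

/-- A Kupisch series of type `A_n`: `ℓ₀ = 1` and `2 ≤ ℓ_i ≤ ℓ_{i-1} + 1` for `i ≥ 1`. -/
def IsKupischA (n : ℕ) (l : Fin n → ℕ) : Prop :=
  (∀ h : 0 < n, l ⟨0, h⟩ = 1) ∧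
  ∀ (i : ℕ) (h : i + 1 < n), 2 ≤ l ⟨i + 1, h⟩ ∧ l ⟨i + 1, h⟩ ≤ l ⟨i, Nat.lt_of_succ_lt h⟩ + 1

theorem IsKupischA.le_add_sub {n : ℕ} {l : Fin n → ℕ} (hl : IsKupischA n l) {i j : Fin n}
    (hij : i ≤ j) : l j ≤ l i + (j.val - i.val) := by
  obtain ⟨j, hj⟩ := j
  induction j, (show i.val ≤ j from hij) using Nat.le_induction with
  | base => simp
  | succ k hik ih =>
    have hstep := (hl.2 k hj).2
    have hprev := ih (by omega) (Fin.le_def.mpr hik)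
    simp only at hprev ⊢
    omega

theorem IsKupischA.sub_add_one_le_of_subinterval {n : ℕ} {l : Fin n → ℕ} (hl : IsKupischA n l)
    {a b a' b' : Fin n} (ha : a' ≤ a) (hab : a ≤ b) (hb : b ≤ b')
    (h : b'.val - a'.val + 1 ≤ l b') : b.val - a.val + 1 ≤ l b := by
  have := hl.le_add_sub hb
  rw [Fin.le_def] at ha hab hb
  omega

theorem monotone_of_interlaces {α : Type*} [Preorder α] {d : ℕ} {lam : Fin (d + 1) → α}
    (hmono : Monotone lam) {mu : Fin d → α}
    (hint : ∀ i : Fin d, lam i.castSucc ≤ mu i ∧ mu i ≤ lam i.succ) : Monotone mu := by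
  intro i j hij
  rcases hij.eq_or_lt with rfl | hlt
  · exact le_rfl
  calc mu i ≤ lam i.succ := (hint i).2
    _ ≤ lam j.castSucc := hmono (Fin.succ_le_castSucc_iff.mpr hlt)
    _ ≤ mu j := (hint j).1

/-- If `λ ∈ os_ℓ^{d+1}` and `μ` is an ordered sequence with
`λ₁ ≤ μ₁ ≤ λ₂ ≤ μ₂ ≤ ⋯ ≤ λ_d ≤ μ_d ≤ λ_{d+1}`, then `μ ∈ os_ℓ^d`. -/
theorem composition_factor_mem_os {n d : ℕ} (hd : 0 < d)
    (l : Fin n → ℕ) (hl : IsKupischA n l)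
    (lam : Fin (d + 1) → Fin n) (hmono : Monotone lam)
    (hlen : (lam (Fin.last d)).val - (lam 0).val + 1 ≤ l (lam (Fin.last d)))
    (mu : Fin d → Fin n)
    (hint : ∀ i : Fin d, lam i.castSucc ≤ mu i ∧ mu i ≤ lam i.succ) :
    (mu ⟨d - 1, by omega⟩).val - (mu ⟨0, hd⟩).val + 1 ≤ l (mu ⟨d - 1, by omega⟩) := by
  have hfirst : lam 0 ≤ mu ⟨0, hd⟩ := (hint ⟨0, hd⟩).1
  have hlast : mu ⟨d - 1, by omega⟩ ≤ lam (Fin.last d) := by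
    have hsucc : (⟨d - 1, by omega⟩ : Fin d).succ = Fin.last d := by ext; simp; omega
    simpa only [hsucc] using (hint ⟨d - 1, by omega⟩).2
  have hmu : mu ⟨0, hd⟩ ≤ mu ⟨d - 1, by omega⟩ :=
    monotone_of_interlaces hmono hint (Fin.le_def.mpr (Nat.zero_le _))
  exact hl.sub_add_one_le_of_subinterval hfirst hmu hlast hlen
end

section
/- Let ℓ be a Kupisch series of type A_n, d ≥ 1, and λ ∈ os_ℓ^d. Setting x := λ_d + 1 − ℓ_{λ_d}, one has 0 ≤ x ≤ λ₁ and (x, λ₁, …, λ_d) ∈ os_ℓ^{d+1}. Moreover, x is the minimum over all x' with 0 ≤ x' ≤ λ₁ such that (x', λ₁, …, λ_d) ∈ os_ℓ^{d+1}. -/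
namespace IsKupischA

variable {n : ℕ} {l : Fin n → ℕ}

theorem one_le_apply (hl : IsKupischA n l) : ∀ i : Fin n, 1 ≤ l i
  | ⟨0, h⟩ => (hl.1 h).ge
  | ⟨i + 1, h⟩ => (hl.2 i h).1.trans' (by norm_num)

theorem apply_le_succ (hl : IsKupischA n l) : ∀ i : Fin n, l i ≤ i.val + 1
  | ⟨0, h⟩ => (hl.1 h).le
  | ⟨i + 1, h⟩ => (hl.2 i h).2.trans (Nat.succ_le_succ (hl.apply_le_succ ⟨i, by omega⟩))

end IsKupischA

/-- For `λ ∈ os_ℓ^d` and `x := λ_d + 1 − ℓ_{λ_d}`: `0 ≤ x ≤ λ₁`,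
`(x, λ₁, …, λ_d) ∈ os_ℓ^{d+1}`, and `x` is minimal with this property. -/
theorem projective_cover_os {n d : ℕ} (hd : 0 < d)
    (l : Fin n → ℕ) (hl : IsKupischA n l)
    (lam : Fin d → Fin n)
    (hlen : (lam ⟨d - 1, by omega⟩).val - (lam ⟨0, hd⟩).val + 1 ≤ l (lam ⟨d - 1, by omega⟩))
    (x : ℕ)
    (hx : (x : ℤ) = ((lam ⟨d - 1, by omega⟩).val : ℤ) + 1 - (l (lam ⟨d - 1, by omega⟩) : ℤ)) :
    (0 : ℤ) ≤ ((lam ⟨d - 1, by omega⟩).val : ℤ) + 1 - (l (lam ⟨d - 1, by omega⟩) : ℤ) ∧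
    x ≤ (lam ⟨0, hd⟩).val ∧
    (lam ⟨d - 1, by omega⟩).val - x + 1 ≤ l (lam ⟨d - 1, by omega⟩) ∧
    ∀ x' : ℕ, x' ≤ (lam ⟨0, hd⟩).val →
      (lam ⟨d - 1, by omega⟩).val - x' + 1 ≤ l (lam ⟨d - 1, by omega⟩) → x ≤ x' := by
  have hpos := hl.one_le_apply (lam ⟨d - 1, by omega⟩)
  have hbound := hl.apply_le_succ (lam ⟨d - 1, by omega⟩)
  exact ⟨by omega, by omega, by omega, fun x' _ hx' => by omega⟩
end

section
/- Let ℓ be a Kupisch series of type A_n and λ ∈ os_ℓ^{d+1} with λ₁ ≥ 1 and λ_{d+1} − λ₁ + 1 ≤ ℓ_{λ_{d+1}} − 1 (so M(λ) is non-projective). Then τ_d(λ) := (λ₁−1, …, λ_{d+1}−1) lies in os_ℓ^{d+1}, and moreover every μ in the product-order interval [τ_d(λ), λ] ⊆ os^{d+1} lies in os_ℓ^{d+1}. -/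
theorem IsKupischA.le_sub_one_add_one {n : ℕ} {l : Fin n → ℕ} (hl : IsKupischA n l)
    (i : Fin n) : l i ≤ l ⟨i - 1, by omega⟩ + 1 := by
  rcases i with ⟨_ | i, hi⟩
  · exact Nat.le_succ _
  · exact (hl.2 i hi).2

theorem Fin.eq_or_eq_sub_one_of_sub_one_le {n : ℕ} {x y : Fin n} (hlo : y.val - 1 ≤ x.val)
    (hhi : x ≤ y) : x = y ∨ x = ⟨y - 1, by omega⟩ := by
  rw [Fin.le_def] at hhi
  rcases eq_or_lt_of_le hhi with h | h
  · exact Or.inl (Fin.ext h)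
  · exact Or.inr (Fin.ext (by simp only; omega))

theorem tau_interval_mem_os_general {n d : ℕ}
    (l : Fin n → ℕ) (hl : IsKupischA n l)
    (lam : Fin (d + 1) → Fin n)
    (hlen : (lam (Fin.last d)).val - (lam 0).val + 1 + 1 ≤ l (lam (Fin.last d))) :
    ((lam (Fin.last d)).val - 1 - ((lam 0).val - 1) + 1 ≤
      l ⟨(lam (Fin.last d)).val - 1,
        lt_of_le_of_lt (Nat.sub_le _ _) (lam (Fin.last d)).isLt⟩) ∧
    ∀ mu : Fin (d + 1) → Fin n, Monotone mu →
      (∀ i, (lam i).val - 1 ≤ (mu i).val ∧ mu i ≤ lam i) →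
      (mu (Fin.last d)).val - (mu 0).val + 1 ≤ l (mu (Fin.last d)) := by
  have hstep := hl.le_sub_one_add_one (lam (Fin.last d))
  refine ⟨by omega, fun mu _ hbound => ?_⟩
  have hfirst := (hbound 0).1
  obtain ⟨hlo, hhi⟩ := hbound (Fin.last d)
  rcases Fin.eq_or_eq_sub_one_of_sub_one_le hlo hhi with h | h <;> simp only [h, Fin.val_mk] <;> omega

/-- If `λ ∈ os_ℓ^{d+1}` with `λ₁ ≥ 1` and `len(λ) ≤ ℓ_{λ_{d+1}} − 1`, then
`τ_d(λ) = (λ₁−1,…,λ_{d+1}−1)` lies in `os_ℓ^{d+1}` and so does every `μ`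
in the product-order interval `[τ_d(λ), λ]`. -/
theorem tau_interval_mem_os {n d : ℕ}
    (l : Fin n → ℕ) (hl : IsKupischA n l)
    (lam : Fin (d + 1) → Fin n) (hmono : Monotone lam)
    (h1 : 1 ≤ (lam 0).val)
    (hlen : (lam (Fin.last d)).val - (lam 0).val + 1 + 1 ≤ l (lam (Fin.last d))) :
    ((lam (Fin.last d)).val - 1 - ((lam 0).val - 1) + 1 ≤
      l ⟨(lam (Fin.last d)).val - 1,
        lt_of_le_of_lt (Nat.sub_le _ _) (lam (Fin.last d)).isLt⟩) ∧
    ∀ mu : Fin (d + 1) → Fin n, Monotone mu →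
      (∀ i, (lam i).val - 1 ≤ (mu i).val ∧ mu i ≤ lam i) →
      (mu (Fin.last d)).val - (mu 0).val + 1 ≤ l (mu (Fin.last d)) :=
  tau_interval_mem_os_general l hl lam hlen
end

section
/- Fix integers ℓ ≥ 2 and d ≥ 1, and let S: os_{ℤℓ}^{d+1} → os_{ℤℓ}^{d+1} be given by S(λ) = (λ₂,…,λ_{d+1}, λ₁+ℓ−1). Then os_{ℓ−1}^{d+1} (the set of ordered sequences 0 ≤ λ₁ ≤ ⋯ ≤ λ_{d+1} ≤ ℓ−2) is a fundamental domain for the action of S: the map os_{ℓ−1}^{d+1} × ℤ → os_{ℤℓ}^{d+1}, (λ, i) ↦ S^i(λ), is bijective. -/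
/-!
Unroll `λ` into the function `f : ℤ → ℤ` with `f j = λ_{j+1}` for `0 ≤ j ≤ d` and
`f (k + d + 1) = f k + ℓ - 1`. Then `λ ∈ os_{ℤℓ}^{d+1}` iff `f` is monotone, `S^n` acts on `f` by
translation by `n`, and `λ ∈ os_{ℓ-1}^{d+1}` iff `f (-1) < 0 ≤ f 0`. As `ℓ - 1 > 0`, a monotone
such `f` is unbounded in both directions, so it crosses `0` at exactly one place `n`: `S^n λ` is
the unique point of the orbit lying in `os_{ℓ-1}^{d+1}`.
-/

/-- `os_{ℤℓ}^{d+1}`: ordered sequences of `d+1` integers of Loewy length at most `ℓ`. -/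
def OSZ (L d : ℕ) : Set (Fin (d + 1) → ℤ) :=
  {lam | Monotone lam ∧ lam (Fin.last d) - lam 0 + 1 ≤ (L : ℤ)}

/-- `S(λ) = (λ₂, …, λ_{d+1}, λ₁ + ℓ − 1)`, as a permutation of all tuples. -/
def SShiftEquiv (L d : ℕ) : Equiv.Perm (Fin (d + 1) → ℤ) where
  toFun lam := fun i =>
    if h : (i : ℕ) < d then lam ⟨(i : ℕ) + 1, by omega⟩ else lam 0 + (L : ℤ) - 1
  invFun lam := fun i =>
    if h : 0 < (i : ℕ) then lam ⟨(i : ℕ) - 1, by omega⟩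
    else lam (Fin.last d) - (L : ℤ) + 1
  left_inv lam := by
    funext i
    dsimp only
    rcases Nat.eq_zero_or_pos (i : ℕ) with h | h
    · have h0 : i = 0 := Fin.ext h
      subst h0
      rw [dif_neg (by omega), dif_neg (by simp)]
      ring
    · have h1 : (i : ℕ) - 1 < d := by omega
      rw [dif_pos h]
      have h2 : ((⟨(i : ℕ) - 1, by omega⟩ : Fin (d + 1)) : ℕ) < d := h1
      rw [dif_pos h2]
      congr 1
      exact Fin.ext (by simp; omega)
  right_inv lam := by
    funext i
    dsimp only
    rcases Nat.lt_or_ge (i : ℕ) d with h | h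
    · rw [dif_pos h]
      have h1 : 0 < ((⟨(i : ℕ) + 1, by omega⟩ : Fin (d + 1)) : ℕ) := by simp
      rw [dif_pos h1]
      congr 1
      all_goals exact Fin.ext (by simp)
    · have h0 : i = Fin.last d := Fin.ext (by have := i.isLt; simp only [Fin.val_last]; omega)
      subst h0
      rw [dif_neg (by simp)]
      have h1 : 0 < ((0 : Fin (d + 1)) : ℕ) ∨ ¬ 0 < ((0 : Fin (d + 1)) : ℕ) := em _
      rw [dif_neg (by simp)]
      ring

open Function Set

def QuasiPeriodic (f : ℤ → ℤ) (p c : ℤ) : Prop :=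
  ∀ k, f (k + p) = f k + c

namespace QuasiPeriodic

variable {f g : ℤ → ℤ} {p c : ℤ}

theorem add_mul (hf : QuasiPeriodic f p c) (k q : ℤ) : f (k + q * p) = f k + q * c := by
  induction q using Int.induction_on with
  | zero => simp
  | succ q ih => rw [add_one_mul, ← add_assoc, hf, ih]; ring
  | pred q ih =>
    have := hf (k + (-q - 1) * p)
    rw [show k + (-q - 1) * p + p = k + -q * p by ring, ih] at this
    linarith

theorem eq_emod_add (hf : QuasiPeriodic f p c) (k : ℤ) : f k = f (k % p) + k / p * c := by
  conv_lhs => rw [← Int.emod_add_mul_ediv k p, mul_comm]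
  exact hf.add_mul _ _

theorem comp_add_right (hf : QuasiPeriodic f p c) (m : ℤ) :
    QuasiPeriodic (fun k => f (k + m)) p c := fun k => by
  simp only [add_right_comm k p m, hf (k + m)]

theorem eq_of_eqOn_Ico (hf : QuasiPeriodic f p c) (hg : QuasiPeriodic g p c) (hp : 0 < p)
    (h : EqOn f g (Ico 0 p)) : f = g := by
  funext k
  rw [hf.eq_emod_add, hg.eq_emod_add, h ⟨Int.emod_nonneg k hp.ne', Int.emod_lt_of_pos k hp⟩]

theorem monotone (hf : QuasiPeriodic f p c) (hp : 0 < p)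
    (h : ∀ k ∈ Ico 0 p, f k ≤ f (k + 1)) : Monotone f := by
  refine monotone_int_of_le_succ fun k => ?_
  have hk1 : k + 1 = (k % p + 1) + k / p * p := by
    linarith [Int.emod_add_mul_ediv k p, mul_comm p (k / p)]
  rw [hf.eq_emod_add k, hk1, hf.add_mul]
  have := h _ ⟨Int.emod_nonneg k hp.ne', Int.emod_lt_of_pos k hp⟩
  omega

theorem exists_lt_le (hf : QuasiPeriodic f p c) (hc : 0 < c) (t : ℤ) :
    ∃ a b, f a < t ∧ t ≤ f b := by
  refine ⟨(-|f 0 - t| - 1) * p, |f 0 - t| * p, ?_, ?_⟩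
  · rw [← zero_add ((-|f 0 - t| - 1) * p), hf.add_mul]
    nlinarith [le_abs_self (f 0 - t), abs_nonneg (f 0 - t)]
  · rw [← zero_add (|f 0 - t| * p), hf.add_mul]
    nlinarith [neg_abs_le (f 0 - t), abs_nonneg (f 0 - t)]

end QuasiPeriodic

theorem Monotone.existsUnique_lt_le {α : Type*} [LinearOrder α] {f : ℤ → α} (hf : Monotone f)
    {a b : ℤ} {t : α} (ha : f a < t) (hb : t ≤ f b) : ∃! n, f (n - 1) < t ∧ t ≤ f n := by
  obtain ⟨n, hn, hleast⟩ := Int.exists_least_of_bdd (P := fun z => t ≤ f z)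
    ⟨a, fun z hz => le_of_lt (hf.reflect_lt (ha.trans_le hz))⟩ ⟨b, hb⟩
  refine ⟨n, ⟨lt_of_not_ge fun h => by linarith [hleast _ h], hn⟩, ?_⟩
  rintro m ⟨hm1, hm⟩
  refine le_antisymm (not_lt.mp fun hnm => ?_) (hleast m hm)
  exact (hm1.trans_le hn).not_ge (hf (by omega))

theorem MulAction.bijOn_zpow_smul {G α : Type*} [Group G] [MulAction G α] (g : G)
    {D X : Set α} (hmaps : ∀ n : ℤ, MapsTo (g ^ n • ·) D X)
    (hunique : ∀ x ∈ X, ∃! n : ℤ, g ^ n • x ∈ D) :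
    BijOn (fun p : α × ℤ => g ^ p.2 • p.1) (D ×ˢ univ) X := by
  refine ⟨fun p hp => hmaps p.2 hp.1, ?_, fun x hx => ?_⟩
  · rintro ⟨a, n⟩ ⟨ha, -⟩ ⟨b, m⟩ ⟨hb, -⟩ (hab : g ^ n • a = g ^ m • b)
    have hnm : -n = -m := (hunique _ (hmaps n ha)).unique
      (show g ^ (-n) • g ^ n • a ∈ D by rwa [zpow_neg, inv_smul_smul])
      (show g ^ (-m) • g ^ n • a ∈ D by rwa [hab, zpow_neg, inv_smul_smul])
    obtain rfl : n = m := neg_injective hnm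
    rw [MulAction.injective _ hab]
  · obtain ⟨n, hn, -⟩ := hunique x hx
    exact ⟨(g ^ n • x, -n), ⟨hn, trivial⟩, by simp [smul_smul]⟩

/-- `os_{ℓ-1}^{d+1}`. -/
def OSBounded (L d : ℕ) : Set (Fin (d + 1) → ℤ) :=
  {lam | Monotone lam ∧ ∀ i, 0 ≤ lam i ∧ lam i ≤ (L : ℤ) - 2}

/-- `seqExt L d λ (j + q (d + 1)) = λ j + q (ℓ - 1)` for `j : Fin (d + 1)`. -/
def seqExt (L d : ℕ) (lam : Fin (d + 1) → ℤ) (k : ℤ) : ℤ :=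
  lam (Fin.ofNat (d + 1) (k % (d + 1)).toNat) + k / (d + 1) * (L - 1)

namespace seqExt

variable {L d : ℕ} {lam : Fin (d + 1) → ℤ}

theorem quasiPeriodic (L d : ℕ) (lam : Fin (d + 1) → ℤ) :
    QuasiPeriodic (seqExt L d lam) (d + 1) (L - 1) := fun k => by
  simp only [seqExt, Int.add_emod_right,
    Int.add_ediv_of_dvd_right (dvd_refl ((d : ℤ) + 1)), Int.ediv_self (by omega : (d : ℤ) + 1 ≠ 0)]
  ring

@[simp]
theorem apply_fin_val (j : Fin (d + 1)) : seqExt L d lam (j : ℕ) = lam j := by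
  have hj : ((j : ℕ) : ℤ) < d + 1 := by exact_mod_cast j.isLt
  simp [seqExt, Int.emod_eq_of_lt (Int.natCast_nonneg _) hj,
    Int.ediv_eq_zero_of_lt (Int.natCast_nonneg _) hj]

theorem apply_zero : seqExt L d lam 0 = lam 0 := by
  simpa using apply_fin_val (lam := lam) 0

theorem apply_period : seqExt L d lam (d + 1) = lam 0 + (L - 1) := by
  rw [← zero_add ((d : ℤ) + 1), quasiPeriodic, apply_zero]

theorem apply_neg_one : seqExt L d lam (-1) = lam (Fin.last d) - (L - 1) := by
  have := quasiPeriodic L d lam (-1)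
  rw [show (-1 : ℤ) + (d + 1) = (Fin.last d : ℕ) by simp, apply_fin_val] at this
  omega

theorem sshift (lam : Fin (d + 1) → ℤ) (k : ℤ) :
    seqExt L d (SShiftEquiv L d lam) k = seqExt L d lam (k + 1) := by
  suffices seqExt L d (SShiftEquiv L d lam) = fun k => seqExt L d lam (k + 1) from congrFun this k
  refine (quasiPeriodic L d _).eq_of_eqOn_Ico ((quasiPeriodic L d lam).comp_add_right 1)
    (by omega) fun k ⟨hk0, hkd⟩ => ?_
  lift k to ℕ using hk0
  have hj : k < d + 1 := by omega
  rw [show (k : ℤ) = ((⟨k, hj⟩ : Fin (d + 1)) : ℕ) from rfl, apply_fin_val]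
  simp only [SShiftEquiv, Equiv.coe_fn_mk]
  split_ifs with hkd'
  · exact (apply_fin_val (lam := lam) ⟨k + 1, by omega⟩).symm
  · rw [show (k : ℤ) + 1 = d + 1 by omega, apply_period]
    ring

theorem sshift_inv (lam : Fin (d + 1) → ℤ) (k : ℤ) :
    seqExt L d ((SShiftEquiv L d)⁻¹ lam) k = seqExt L d lam (k - 1) := by
  simpa using (sshift (L := L) ((SShiftEquiv L d)⁻¹ lam) (k - 1)).symm

theorem sshift_zpow (n : ℤ) (lam : Fin (d + 1) → ℤ) (k : ℤ) :
    seqExt L d ((SShiftEquiv L d ^ n) lam) k = seqExt L d lam (k + n) := by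
  induction n using Int.induction_on generalizing lam k with
  | zero => simp
  | succ n ih => rw [zpow_add_one, Equiv.Perm.mul_apply, ih, sshift, add_assoc]
  | pred n ih => rw [zpow_sub_one, Equiv.Perm.mul_apply, ih, sshift_inv, add_sub_assoc]

end seqExt

theorem mem_OSZ_iff_monotone_seqExt {L d : ℕ} {lam : Fin (d + 1) → ℤ} :
    lam ∈ OSZ L d ↔ Monotone (seqExt L d lam) := by
  have hlast : seqExt L d lam d = lam (Fin.last d) := by
    simpa using seqExt.apply_fin_val (L := L) (lam := lam) (Fin.last d)
  constructor
  · rintro ⟨hmono, hlen⟩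
    refine (seqExt.quasiPeriodic L d lam).monotone (by omega) fun k ⟨hk0, hkd⟩ => ?_
    lift k to ℕ using hk0
    by_cases hk : k < d
    · have h := hmono (show (⟨k, by omega⟩ : Fin (d + 1)) ≤ ⟨k + 1, by omega⟩ from k.le_succ)
      rw [← seqExt.apply_fin_val (L := L) (lam := lam),
        ← seqExt.apply_fin_val (L := L) (lam := lam) ⟨k + 1, _⟩] at h
      exact_mod_cast h
    · obtain rfl : k = d := by omega
      rw [hlast, seqExt.apply_period]
      omega
  · intro hmono
    refine ⟨fun i j hij => ?_, ?_⟩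
    · simpa using hmono (show ((i : ℕ) : ℤ) ≤ (j : ℕ) by exact_mod_cast hij)
    · have := hmono (show (d : ℤ) ≤ d + 1 by omega)
      rw [hlast, seqExt.apply_period] at this
      omega

theorem sshift_zpow_mem_OSZ {L d : ℕ} (n : ℤ) {lam : Fin (d + 1) → ℤ} (h : lam ∈ OSZ L d) :
    (SShiftEquiv L d ^ n) lam ∈ OSZ L d := by
  rw [mem_OSZ_iff_monotone_seqExt] at h ⊢
  intro a b hab
  simp only [seqExt.sshift_zpow]
  exact h (by omega)

theorem OSBounded_subset_OSZ (L d : ℕ) : OSBounded L d ⊆ OSZ L d :=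
  fun _ ⟨hmono, hbd⟩ => ⟨hmono, by linarith [(hbd 0).1, (hbd (Fin.last d)).2]⟩

theorem mem_OSBounded_iff {L d : ℕ} {lam : Fin (d + 1) → ℤ} (h : lam ∈ OSZ L d) :
    lam ∈ OSBounded L d ↔ seqExt L d lam (-1) < 0 ∧ 0 ≤ seqExt L d lam 0 := by
  rw [seqExt.apply_neg_one, seqExt.apply_zero]
  refine ⟨fun ⟨_, hbd⟩ => ⟨by linarith [(hbd (Fin.last d)).2], (hbd 0).1⟩,
    fun ⟨hlast, h0⟩ => ⟨h.1, fun i => ⟨?_, ?_⟩⟩⟩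
  · linarith [h.1 (Fin.zero_le i)]
  · linarith [h.1 (Fin.le_last i)]

theorem existsUnique_sshift_zpow_mem_OSBounded {L d : ℕ} (hL : 2 ≤ L) {lam : Fin (d + 1) → ℤ}
    (h : lam ∈ OSZ L d) : ∃! n : ℤ, (SShiftEquiv L d ^ n) lam ∈ OSBounded L d := by
  obtain ⟨a, b, ha, hb⟩ := (seqExt.quasiPeriodic L d lam).exists_lt_le (by omega) 0
  have hmono := mem_OSZ_iff_monotone_seqExt.mp h
  refine (existsUnique_congr fun n => ?_).mpr (hmono.existsUnique_lt_le ha hb)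
  rw [mem_OSBounded_iff (sshift_zpow_mem_OSZ n h), seqExt.sshift_zpow, seqExt.sshift_zpow,
    zero_add, neg_add_eq_sub]

/-- `os_{ℓ−1}^{d+1}` (ordered sequences with entries in `{0,…,ℓ−2}`) is a fundamental
domain for the action of `S` on `os_{ℤℓ}^{d+1}`: the map `(λ, i) ↦ S^i(λ)` is a
bijection onto `os_{ℤℓ}^{d+1}`. -/
theorem sshift_fundamental_domain (L d : ℕ) (hL : 2 ≤ L) :
    Set.BijOn (fun p : (Fin (d + 1) → ℤ) × ℤ => ((SShiftEquiv L d) ^ p.2) p.1)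
      ({lam | Monotone lam ∧ ∀ i, 0 ≤ lam i ∧ lam i ≤ (L : ℤ) - 2} ×ˢ (Set.univ : Set ℤ))
      (OSZ L d) :=
  MulAction.bijOn_zpow_smul (SShiftEquiv L d)
    (fun n _ hlam => sshift_zpow_mem_OSZ n (OSBounded_subset_OSZ L d hlam))
    (fun _ => existsUnique_sshift_zpow_mem_OSBounded hL)
end

section
/- Let n be a positive integer and consider the linear order A_n = {0 < 1 < ⋯ < n−1}. For ordered sequences λ, μ ∈ os_n^{d+1}, there exists a nonzero homomorphism from the interval module M(λ) = M[(λ₁,…,λ_d), (λ₂,…,λ_{d+1})] to M(μ) = M[(μ₁,…,μ_d), (μ₂,…,μ_{d+1})] over the poset A_n^d if and only if λ interlaces μ, and in that case the Hom-space is one-dimensional. -/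
/-- The first `d` entries of a tuple of length `d+1`. -/
def initF {P : Type*} {d : ℕ} (f : Fin (d + 1) → P) : Fin d → P := fun i => f i.castSucc

/-- The last `d` entries of a tuple of length `d+1`. -/
def tailF {P : Type*} {d : ℕ} (f : Fin (d + 1) → P) : Fin d → P := fun i => f i.succ

/-!
A homomorphism `M[a,b] → M[c,e]` is a scalar on each point of `[a,b] ∩ [c,e]`. Naturality along
`c ≤ z` and `z ≤ b` forces it to vanish unless `c ∈ [a,b]` and `b ∈ [c,e]`, i.e. `a ≤ c ≤ b ≤ e`.
Conversely, under these inequalities the indicator of `[a,b] ∩ [c,e]` is a homomorphism, and as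
`c` is the least point of the intersection, every homomorphism is its multiple by the value at `c`.
For `a, b = initF λ, tailF λ` and `c, e = initF μ, tailF μ` the chain `a ≤ c ≤ b ≤ e` is
exactly `λ ↝ μ`.
-/

open Set

section IntervalHom

variable {K : Type*} [Field K] {Q : Type*} [PartialOrder Q]

theorem eq_smul_indicator_of_mem_intervalHom {S T : Set Q} {m : Q} (hm : IsLeast (S ∩ T) m)
    {φ : Q → K} (hφ : φ ∈ intervalHom K S T) :
    φ = φ m • (S ∩ T).indicator (fun _ => (1 : K)) := by
  obtain ⟨hzero, hconst, -, -⟩ := hφ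
  funext x
  by_cases hx : x ∈ S ∩ T
  · simp [hx, hconst m x (hm.2 hx) hm.1 hx]
  · simp [hx, hzero x hx]

variable {a b c e : Q}

theorem indicator_mem_intervalHom_Icc (hac : a ≤ c) (hbe : b ≤ e) :
    (Icc a b ∩ Icc c e).indicator (fun _ => (1 : K)) ∈ intervalHom K (Icc a b) (Icc c e) := by
  refine ⟨fun x hx => indicator_of_notMem hx _, fun x y _ hx hy => by simp [hx, hy], ?_, ?_⟩
  · intro x y hxy hy hxT hxS
    exact absurd ⟨hac.trans hxT.1, hxy.trans hy.1.2⟩ hxS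
  · intro x y hxy hx hyS hyT
    exact absurd ⟨hx.2.1.trans hxy, hyS.2.trans hbe⟩ hyT

theorem le_of_mem_intervalHom_Icc_of_ne_zero (hab : a ≤ b) (hce : c ≤ e) {φ : Q → K}
    (hφ : φ ∈ intervalHom K (Icc a b) (Icc c e)) (hne : φ ≠ 0) :
    a ≤ c ∧ c ≤ b ∧ b ≤ e := by
  obtain ⟨hzero, -, hsub, hquot⟩ := hφ
  obtain ⟨z, hz⟩ := Function.ne_iff.mp hne
  have hzST : z ∈ Icc a b ∩ Icc c e := not_not.mp (mt (hzero z) hz)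
  have hcS : c ∈ Icc a b := by_contra fun h => hz (hsub c z hzST.2.1 hzST ⟨le_rfl, hce⟩ h)
  have hbT : b ∈ Icc c e := by_contra fun h => hz (hquot z b hzST.1.2 hzST ⟨hab, le_rfl⟩ h)
  exact ⟨hcS.1, hcS.2, hbT.2⟩

theorem rank_intervalHom_Icc_eq_one (hac : a ≤ c) (hcb : c ≤ b) (hbe : b ≤ e) :
    Module.rank K (intervalHom K (Icc a b) (Icc c e)) = 1 := by
  have hc : c ∈ Icc a b ∩ Icc c e := ⟨⟨hac, hcb⟩, le_rfl, hcb.trans hbe⟩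
  have hleast : IsLeast (Icc a b ∩ Icc c e) c := ⟨hc, fun x hx => hx.2.1⟩
  refine (rank_submodule_eq_one_iff _).mpr ⟨_, indicator_mem_intervalHom_Icc hac hbe, ?_, ?_⟩
  · exact fun h => one_ne_zero (α := K) (by simpa [hc] using congrFun h c)
  · intro φ hφ
    rw [eq_smul_indicator_of_mem_intervalHom hleast hφ]
    exact Submodule.smul_mem _ _ (Submodule.mem_span_singleton_self _)

theorem exists_ne_zero_mem_intervalHom_Icc_iff (hab : a ≤ b) (hce : c ≤ e) :
    (∃ φ ∈ intervalHom K (Icc a b) (Icc c e), φ ≠ 0) ↔ a ≤ c ∧ c ≤ b ∧ b ≤ e := by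
  refine ⟨fun ⟨φ, hφ, hne⟩ => le_of_mem_intervalHom_Icc_of_ne_zero hab hce hφ hne, ?_⟩
  rintro ⟨hac, hcb, hbe⟩
  obtain ⟨φ, hφ, hne, -⟩ :=
    (rank_submodule_eq_one_iff _).mp (rank_intervalHom_Icc_eq_one (K := K) hac hcb hbe)
  exact ⟨φ, hφ, hne⟩

end IntervalHom

theorem interlaces_iff_initF_tailF {P : Type*} [PartialOrder P] {d : ℕ} (hd : 0 < d)
    {x y : Fin (d + 1) → P} :
    Interlaces x y ↔ initF x ≤ initF y ∧ initF y ≤ tailF x ∧ tailF x ≤ tailF y := by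
  obtain ⟨d, rfl⟩ := Nat.exists_eq_add_one_of_ne_zero hd.ne'
  constructor
  · rintro ⟨hle, hstep⟩
    exact ⟨fun i => hle _, fun i => hstep i (by omega), fun i => hle _⟩
  · rintro ⟨hinit, hmid, htail⟩
    refine ⟨fun i => ?_, fun i hi => hmid ⟨i, by omega⟩⟩
    rcases i.eq_castSucc_or_eq_last with ⟨j, rfl⟩ | rfl
    · exact hinit j
    · rw [← Fin.succ_last]
      exact htail _

theorem hom_M_lambda_M_mu_general (K : Type*) [Field K] {n d : ℕ} (hd : 0 < d)
    (lam mu : Fin (d + 1) → Fin n) (hlam : Monotone lam) (hmu : Monotone mu) :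
    ((∃ φ ∈ intervalHom K (Set.Icc (initF lam) (tailF lam))
        (Set.Icc (initF mu) (tailF mu)), φ ≠ 0) ↔ Interlaces lam mu) ∧
    (Interlaces lam mu →
      Module.rank K ↥(intervalHom K (Set.Icc (initF lam) (tailF lam))
        (Set.Icc (initF mu) (tailF mu))) = 1) := by
  have hlam' : initF lam ≤ tailF lam := fun i => hlam i.castSucc_le_succ
  have hmu' : initF mu ≤ tailF mu := fun i => hmu i.castSucc_le_succ
  rw [interlaces_iff_initF_tailF hd, exists_ne_zero_mem_intervalHom_Icc_iff hlam' hmu']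
  exact ⟨Iff.rfl, fun ⟨hac, hcb, hbe⟩ => rank_intervalHom_Icc_eq_one hac hcb hbe⟩

/-- For `λ, μ ∈ os_n^{d+1}`, there is a nonzero homomorphism
`M(λ) = M[(λ₁,…,λ_d),(λ₂,…,λ_{d+1})] → M(μ)` over the poset `A_n^d` iff `λ ↝ μ`,
in which case the Hom-space is one-dimensional. -/
theorem hom_M_lambda_M_mu (K : Type*) [Field K] {n d : ℕ} (hd : 0 < d) (hn : 0 < n)
    (lam mu : Fin (d + 1) → Fin n) (hlam : Monotone lam) (hmu : Monotone mu) :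
    ((∃ φ ∈ intervalHom K (Set.Icc (initF lam) (tailF lam))
        (Set.Icc (initF mu) (tailF mu)), φ ≠ 0) ↔ Interlaces lam mu) ∧
    (Interlaces lam mu →
      Module.rank K ↥(intervalHom K (Set.Icc (initF lam) (tailF lam))
        (Set.Icc (initF mu) (tailF mu))) = 1) :=
  hom_M_lambda_M_mu_general K hd lam mu hlam hmu
end

section
/- Let P be a poset, d a positive integer, and λ ∈ os^{d+1}(P) an ordered sequence of length d+1. If η: M(λ) → M(μ) is a nonzero homomorphism of modules over the incidence category of P^d between the interval modules associated to ordered sequences λ, μ of length d+1, then the image of η is isomorphic to the interval module M[(μ₁,…,μ_d), (λ₂,…,λ_{d+1})]. -/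
/-!
If `φ x₀ ≠ 0` for a homomorphism `M[a,b] → M[c,e]`, then `a ≤ c`: otherwise `c` is a point of
`[c,e] \ [a,b]` below `x₀`, and naturality forces `φ x₀ = 0`. Dually `b ≤ e`, using the point `b`
of `[a,b] \ [c,e]` above `x₀`. So `[a,b] ∩ [c,e] = [c,b]`, on which `φ` is constant, equal to
`φ c = φ x₀ ≠ 0`.
-/

open Set

section

variable {K : Type*} [Field K] {Q : Type*} [PartialOrder Q] {φ : Q → K} {x : Q}

theorem mem_inter_of_mem_intervalHom {S T : Set Q} (hφ : φ ∈ intervalHom K S T)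
    (hx : φ x ≠ 0) : x ∈ S ∩ T :=
  not_imp_comm.mp (hφ.1 x) hx

variable {a b c e : Q}

theorem left_le_of_mem_intervalHom (hφ : φ ∈ intervalHom K (Icc a b) (Icc c e))
    (hx : φ x ≠ 0) : a ≤ c := by
  obtain ⟨⟨hax, hxb⟩, hcx, hxe⟩ := mem_inter_of_mem_intervalHom hφ hx
  by_contra hac
  exact hx (hφ.2.2.1 c x hcx ⟨⟨hax, hxb⟩, hcx, hxe⟩ ⟨le_rfl, hcx.trans hxe⟩ fun h => hac h.1)

theorem right_le_of_mem_intervalHom (hφ : φ ∈ intervalHom K (Icc a b) (Icc c e))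
    (hx : φ x ≠ 0) : b ≤ e := by
  obtain ⟨⟨hax, hxb⟩, hcx, hxe⟩ := mem_inter_of_mem_intervalHom hφ hx
  by_contra hbe
  exact hx (hφ.2.2.2 x b hxb ⟨⟨hax, hxb⟩, hcx, hxe⟩ ⟨hax.trans hxb, le_rfl⟩ fun h => hbe h.2)

theorem support_of_mem_intervalHom (hφ : φ ∈ intervalHom K (Icc a b) (Icc c e))
    (hne : φ ≠ 0) : Function.support φ = Icc c b := by
  obtain ⟨x₀, hx₀⟩ := Function.ne_iff.mp hne
  have hac := left_le_of_mem_intervalHom hφ hx₀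
  have hbe := right_le_of_mem_intervalHom hφ hx₀
  have hinter : ∀ {y}, c ≤ y → y ≤ b → y ∈ Icc a b ∩ Icc c e :=
    fun hcy hyb => ⟨⟨hac.trans hcy, hyb⟩, hcy, hyb.trans hbe⟩
  have hconst : ∀ {y}, c ≤ y → y ≤ b → φ c = φ y :=
    fun hcy hyb => hφ.2.1 c _ hcy (hinter le_rfl (hcy.trans hyb)) (hinter hcy hyb)
  obtain ⟨⟨-, hx₀b⟩, hcx₀, -⟩ := mem_inter_of_mem_intervalHom hφ hx₀
  ext y
  refine ⟨fun hy => ?_, fun ⟨hcy, hyb⟩ => ?_⟩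
  · obtain ⟨⟨-, hyb⟩, hcy, -⟩ := mem_inter_of_mem_intervalHom hφ hy
    exact ⟨hcy, hyb⟩
  · rwa [Function.mem_support, ← hconst hcy hyb, hconst hcx₀ hx₀b]

end

theorem image_of_nonzero_hom_general (K : Type*) [Field K] {P : Type*} [PartialOrder P]
    {d : ℕ}
    (lam mu : Fin (d + 1) → P)
    (φ : (Fin d → P) → K)
    (hφ : φ ∈ intervalHom K (Set.Icc (initF lam) (tailF lam))
      (Set.Icc (initF mu) (tailF mu)))
    (hne : φ ≠ 0) :
    {x : Fin d → P | φ x ≠ 0} = Set.Icc (initF mu) (tailF lam) :=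
  support_of_mem_intervalHom hφ hne

/-- If `η : M(λ) → M(μ)` is a nonzero homomorphism between the interval modules
associated to ordered sequences `λ, μ` of length `d+1` over the poset `P^d`, then
its image is the interval module `M[(μ₁,…,μ_d),(λ₂,…,λ_{d+1})]`: the support of
the scalar components of `η` is exactly the interval `[(μ₁,…,μ_d),(λ₂,…,λ_{d+1})]`. -/
theorem image_of_nonzero_hom (K : Type*) [Field K] {P : Type*} [PartialOrder P]
    {d : ℕ} (hd : 0 < d)
    (lam mu : Fin (d + 1) → P) (hlam : Monotone lam) (hmu : Monotone mu)
    (φ : (Fin d → P) → K)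
    (hφ : φ ∈ intervalHom K (Set.Icc (initF lam) (tailF lam))
      (Set.Icc (initF mu) (tailF mu)))
    (hne : φ ≠ 0) :
    {x : Fin d → P | φ x ≠ 0} = Set.Icc (initF mu) (tailF lam) :=
  image_of_nonzero_hom_general K lam mu φ hφ hne
end
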